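/- arXiv:2203.15715 — 3 statements merged into one kernel-verified Lean document; each statement's English description precedes it below -/
import Mathlib

section
/- Let H be a complex Hilbert space and let x, y ∈ H be two non-zero vectors. For the rank one operator T = x⊗y, the mean transform satisfies M(x⊗y) = (1/2)(x + (⟨x,y⟩/‖y‖²) y) ⊗ y. -/
noncomputable section

variable {H : Type*} [NormedAddCommGroup H] [InnerProductSpace ℂ H] [CompleteSpace H]

/-- The modulus `|T| = (T*T)^(1/2)` of a bounded operator. -/
noncomputable def absOp (T : H →L[ℂ] H) : H →L[ℂ] H :=
  CFC.sqrt (ContinuousLinearMap.adjoint T * T)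

/-- `V` is the partial isometry appearing in the polar decomposition `T = V|T|` of `T`,
i.e. `V` is a partial isometry, `V|T| = T` and `ker V = ker T`. -/
def IsPolarIsometry (T V : H →L[ℂ] H) : Prop :=
  V * ContinuousLinearMap.adjoint V * V = V ∧ V * absOp T = T ∧
    LinearMap.ker (V : H →ₗ[ℂ] H) = LinearMap.ker (T : H →ₗ[ℂ] H)

open Classical in
/-- The mean transform `M(T) = (V|T| + |T|V)/2`, where `T = V|T|` is the
polar decomposition of `T`. -/
noncomputable def meanTransform (T : H →L[ℂ] H) : H →L[ℂ] H :=
  if h : ∃ V, IsPolarIsometry T V then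
    (2 : ℂ)⁻¹ • (h.choose * absOp T + absOp T * h.choose)
  else 0

/-- The rank one operator `x ⊗ y : u ↦ ⟨u, y⟩ x` (inner product linear in the
first variable, so `⟨u, y⟩ = inner y u` in mathlib's convention). -/
noncomputable def rankOne (x y : H) : H →L[ℂ] H :=
  (innerSL ℂ y).smulRight x

/-- The Jordan product `A ∘ B = (AB + BA)/2`. -/
noncomputable def jordanProd (A B : H →L[ℂ] H) : H →L[ℂ] H :=
  (2 : ℂ)⁻¹ • (A * B + B * A)

/-- An orthogonal projection: `P² = P = P*`. -/
def IsOrthogonalProjection (P : H →L[ℂ] H) : Prop :=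
  P * P = P ∧ ContinuousLinearMap.adjoint P = P

/-- A quasi-normal operator: `T(T*T) = (T*T)T`. -/
def IsQuasinormal (T : H →L[ℂ] H) : Prop :=
  T * (ContinuousLinearMap.adjoint T * T) = ContinuousLinearMap.adjoint T * T * T

/-- A rank one orthogonal projection: an operator of the form `x ⊗ x` for a unit vector `x`. -/
def IsRankOneProjection (T : H →L[ℂ] H) : Prop :=
  ∃ x : H, ‖x‖ = 1 ∧ T = rankOne x x

/-!
The modulus of `x ⊗ y` is `‖x‖/‖y‖ • y ⊗ y`, since its square is `(x ⊗ y)* (x ⊗ y) = ‖x‖² y ⊗ y`.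
Any `V` with `V |T| = T` and `ker V = ker T = y^⊥` is then pinned down by its value at `y`,
so the polar isometry of `x ⊗ y` is `(‖x‖ ‖y‖)⁻¹ • x ⊗ y`. The mean transform is
`(T + |T| V) / 2`, and `|T| V = (⟨x, y⟩ / ‖y‖²) y ⊗ y`.
-/

section

variable {E : Type*} [NormedAddCommGroup E] [InnerProductSpace ℂ E]

lemma rankOne_eq_innerProductSpace_rankOne (x y : E) :
    rankOne x y = InnerProductSpace.rankOne ℂ x y :=
  rfl

lemma rankOne_apply (x y u : E) : rankOne x y u = inner ℂ y u • x :=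
  rfl

lemma rankOne_mul_rankOne (a b c d : E) :
    rankOne a b * rankOne c d = inner ℂ b c • rankOne a d :=
  InnerProductSpace.rankOne_comp_rankOne a b c d

lemma rankOne_add_left (x x' y : E) : rankOne (x + x') y = rankOne x y + rankOne x' y := by
  simp only [rankOne_eq_innerProductSpace_rankOne, map_add, add_apply]

lemma rankOne_smul_left (c : ℂ) (x y : E) : rankOne (c • x) y = c • rankOne x y := by
  simp only [rankOne_eq_innerProductSpace_rankOne, map_smul, smul_apply]

lemma inner_self_eq_norm_sq_complex (y : E) : inner ℂ y y = (‖y‖ : ℂ) ^ 2 := by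
  exact_mod_cast inner_self_eq_norm_sq_to_K y

lemma eq_rankOne_of_apply_eq_zero_of_inner_eq_zero (V : E →L[ℂ] E) {y : E} (hy : y ≠ 0)
    (hV : ∀ u, inner ℂ y u = 0 → V u = 0) :
    V = rankOne (((‖y‖ : ℂ) ^ 2)⁻¹ • V y) y := by
  have hy' : (‖y‖ : ℂ) ≠ 0 := by simpa using hy
  ext u
  set c := inner ℂ y u / (‖y‖ : ℂ) ^ 2
  have horth : inner ℂ y (u - c • y) = 0 := by
    rw [inner_sub_right, inner_smul_right, inner_self_eq_norm_sq_complex,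
      div_mul_cancel₀ _ (pow_ne_zero 2 hy'), sub_self]
  have hVu : V u = c • V y := by
    simpa only [map_sub, map_smul, sub_eq_zero] using hV _ horth
  rw [hVu, rankOne_apply, smul_smul]
  rfl

end

lemma adjoint_rankOne (x y : H) : ContinuousLinearMap.adjoint (rankOne x y) = rankOne y x :=
  InnerProductSpace.adjoint_rankOne x y

lemma absOp_rankOne (x y : H) (hy : y ≠ 0) :
    absOp (rankOne x y) = ((‖x‖ / ‖y‖ : ℝ) : ℂ) • rankOne y y := by
  have hy' : (‖y‖ : ℂ) ≠ 0 := by simpa using hy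
  have hpos : (0 : H →L[ℂ] H) ≤ ((‖x‖ / ‖y‖ : ℝ) : ℂ) • rankOne y y := by
    rw [ContinuousLinearMap.nonneg_iff_isPositive]
    exact (InnerProductSpace.isPositive_rankOne_self y).smul_of_nonneg
      (Complex.zero_le_real.mpr (by positivity))
  rw [absOp, adjoint_rankOne, rankOne_mul_rankOne]
  refine CFC.sqrt_unique ?_ hpos
  rw [smul_mul_smul_comm, rankOne_mul_rankOne, smul_smul, inner_self_eq_norm_sq_complex,
    inner_self_eq_norm_sq_complex]
  congr 1
  push_cast
  field_simp

lemma isPolarIsometry_rankOne (x y : H) (hx : x ≠ 0) (hy : y ≠ 0) :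
    IsPolarIsometry (rankOne x y) (rankOne (((‖x‖ : ℂ) * ‖y‖)⁻¹ • x) y) := by
  have hx' : (‖x‖ : ℂ) ≠ 0 := by simpa using hx
  have hy' : (‖y‖ : ℂ) ≠ 0 := by simpa using hy
  refine ⟨?_, ?_, ?_⟩
  · rw [adjoint_rankOne, rankOne_mul_rankOne, smul_mul_assoc, rankOne_mul_rankOne, smul_smul]
    convert one_smul ℂ _ using 2
    rw [inner_smul_left, inner_smul_right, inner_self_eq_norm_sq_complex,
      inner_self_eq_norm_sq_complex]
    simp only [map_inv₀, map_mul, Complex.conj_ofReal]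
    field_simp
  · rw [absOp_rankOne x y hy, mul_smul_comm, rankOne_mul_rankOne, smul_smul,
      inner_self_eq_norm_sq_complex, rankOne_smul_left, smul_smul]
    convert one_smul ℂ (rankOne x y) using 2
    push_cast
    field_simp
  · rw [rankOne_smul_left, ContinuousLinearMap.toLinearMap_smul]
    exact LinearMap.ker_smul _ _ (by simp [hx', hy'])

lemma eq_of_isPolarIsometry_rankOne {x y : H} (hx : x ≠ 0) (hy : y ≠ 0) {V : H →L[ℂ] H}
    (hV : IsPolarIsometry (rankOne x y) V) :
    V = rankOne (((‖x‖ : ℂ) * ‖y‖)⁻¹ • x) y := by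
  have hx' : (‖x‖ : ℂ) ≠ 0 := by simpa using hx
  have hy' : (‖y‖ : ℂ) ≠ 0 := by simpa using hy
  have hker : ∀ u, inner ℂ y u = 0 → V u = 0 := fun u hu ↦ by
    have hTu : u ∈ LinearMap.ker (rankOne x y : H →ₗ[ℂ] H) := by
      simp only [LinearMap.mem_ker, ContinuousLinearMap.coe_coe, rankOne_apply, hu, zero_smul]
    rw [← hV.2.2] at hTu
    exact hTu
  have hVy : (((‖x‖ / ‖y‖ : ℝ) : ℂ) * (‖y‖ : ℂ) ^ 2) • V y = (‖y‖ : ℂ) ^ 2 • x := by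
    have h := congrArg (· y) hV.2.1
    simpa only [mul_apply_eq_comp, absOp_rankOne x y hy,
      smul_apply, rankOne_apply, inner_self_eq_norm_sq_complex, map_smul,
      smul_smul] using h
  have ha : ((‖x‖ / ‖y‖ : ℝ) : ℂ) * (‖y‖ : ℂ) ^ 2 ≠ 0 := by
    push_cast
    field_simp
    exact mul_ne_zero hx' hy'
  rw [eq_rankOne_of_apply_eq_zero_of_inner_eq_zero V hy hker, ← inv_smul_smul₀ ha (V y), hVy,
    smul_smul, smul_smul]
  congr 2
  push_cast
  field_simp

lemma meanTransform_eq_of_forall_isPolarIsometry {T V : H →L[ℂ] H} (hV : IsPolarIsometry T V)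
    (huniq : ∀ W, IsPolarIsometry T W → W = V) :
    meanTransform T = (2 : ℂ)⁻¹ • (T + absOp T * V) := by
  have hex : ∃ W, IsPolarIsometry T W := ⟨V, hV⟩
  rw [meanTransform, dif_pos hex, hex.choose_spec.2.1, huniq _ hex.choose_spec]

theorem meanTransform_rankOne (x y : H) (hx : x ≠ 0) (hy : y ≠ 0) :
    meanTransform (rankOne x y) =
      rankOne ((2 : ℂ)⁻¹ • (x + ((inner ℂ y x : ℂ) / (‖y‖ : ℂ) ^ 2) • y)) y := by
  have hx' : (‖x‖ : ℂ) ≠ 0 := by simpa using hx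
  have hy' : (‖y‖ : ℂ) ≠ 0 := by simpa using hy
  rw [meanTransform_eq_of_forall_isPolarIsometry (isPolarIsometry_rankOne x y hx hy)
      (fun _ ↦ eq_of_isPolarIsometry_rankOne hx hy), absOp_rankOne x y hy, smul_mul_assoc,
    rankOne_mul_rankOne, inner_smul_right, smul_smul, rankOne_smul_left, rankOne_add_left,
    rankOne_smul_left]
  congr 3
  push_cast
  field_simp

end
end

section
/- Let H and K be complex Hilbert spaces and let Φ : B(H) → B(K) be a bijective map satisfying M(Φ(A)∘Φ(B)) = Φ(M(A∘B)) for all A, B ∈ B(H). Then Φ(0) = 0. -/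
noncomputable section

variable {H : Type*} [NormedAddCommGroup H] [InnerProductSpace ℂ H] [CompleteSpace H]

@[simp]
lemma absOp_zero : absOp (0 : H →L[ℂ] H) = 0 := by
  rw [absOp, mul_zero, CFC.sqrt_zero]

@[simp]
lemma meanTransform_zero : meanTransform (0 : H →L[ℂ] H) = 0 := by
  unfold meanTransform
  split <;> simp

omit [CompleteSpace H] in
@[simp]
lemma jordanProd_zero_left (B : H →L[ℂ] H) : jordanProd 0 B = 0 := by
  simp [jordanProd]

omit [CompleteSpace H] in
@[simp]
lemma jordanProd_zero_right (A : H →L[ℂ] H) : jordanProd A 0 = 0 := by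
  simp [jordanProd]

theorem phi_zero
    {K : Type*} [NormedAddCommGroup K] [InnerProductSpace ℂ K] [CompleteSpace K]
    (Φ : (H →L[ℂ] H) → (K →L[ℂ] K)) (hΦ : Function.Bijective Φ)
    (hc : ∀ A B : H →L[ℂ] H,
      meanTransform (jordanProd (Φ A) (Φ B)) = Φ (meanTransform (jordanProd A B))) :
    Φ 0 = 0 := by
  obtain ⟨X, hX⟩ := hΦ.2 0
  calc Φ 0 = Φ (meanTransform (jordanProd X 0)) := by simp
    _ = meanTransform (jordanProd (Φ X) (Φ 0)) := (hc X 0).symm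
    _ = 0 := by simp [hX]

end
end

section
/- Let H and K be complex Hilbert spaces and let Φ : B(H) → B(K) be a bijective map satisfying M(Φ(A)∘Φ(B)) = Φ(M(A∘B)) for all A, B ∈ B(H). Then Φ(I) = I, where I denotes the identity operator. -/
/-
If `M(T²) = T`, write `Q = T²`, `A = |Q|`, `V` for the polar isometry of `Q` and `E = V*V`.
From `2T = VA + AV` one gets the intertwining `AT = T*A`, so `T*² - AV` vanishes on the range
of `A`; since `ker A = ker V`, that range is dense in the range of `E`, whence `T*²E = 2T - Q`.
Taking adjoints shows that `ET` is self-adjoint and idempotent, and then that `T = ET`: so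
`M(T²) = T` forces `T` to be an orthogonal projection, and conversely `M(P) = P` for those.
For `S = Φ⁻¹(1)` the hypothesis at `(S, S)` gives `M(S²) = S`, so `S` is a projection and
`M(S) = S`; at `(S, I)` it gives `M(Φ I) = Φ(M S) = I`, and at `(I, I)` it gives
`M((Φ I)²) = Φ I`, so `Φ I` is a projection and `Φ I = M(Φ I) = I`.
-/

noncomputable section

variable {H : Type*} [NormedAddCommGroup H] [InnerProductSpace ℂ H] [CompleteSpace H]

theorem eq_of_add_self_eq_add_self {M : Type*} [AddMonoid M] [IsAddTorsionFree M] {x y : M}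
    (h : x + x = y + y) : x = y :=
  IsAddTorsionFree.nsmul_right_injective two_ne_zero (by simpa only [two_nsmul] using h)

theorem isStarProjection_star_mul_self_of_mul_star_mul_eq {R : Type*} [Monoid R] [StarMul R]
    {V : R} (hV : V * star V * V = V) : IsStarProjection (star V * V) where
  isIdempotentElem := by rw [IsIdempotentElem, mul_assoc, ← mul_assoc V, hV]
  isSelfAdjoint := by rw [IsSelfAdjoint, star_mul, star_star]

section StarRing

variable {R : Type*} [Ring R] [StarRing R] [IsAddTorsionFree R]

theorem mul_eq_star_mul_of_mul_add_mul_eq {T V A : R} (hA : IsSelfAdjoint A)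
    (hAE : A * (star V * V) = A) (hVA : V * A = T * T) (hT : V * A + A * V = T + T) :
    A * T = star T * A := by
  have hEA : star V * V * A = A := by
    simpa only [star_mul, star_star, hA.star_eq, mul_assoc] using congrArg star hAE
  have hVQ : star V * (T * T) = A := by rw [← hVA, ← mul_assoc, hEA]
  have hQV : star T * star T * V = A := by
    simpa only [star_mul, star_star, hA.star_eq, mul_assoc] using congrArg star hVQ
  have hVT : star V * T = star T * V := by
    apply eq_of_add_self_eq_add_self
    calc star V * T + star V * T = star V * (V * A + A * V) := by rw [hT, mul_add]
      _ = A + star V * A * V := by rw [mul_add, ← mul_assoc, hEA, mul_assoc]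
      _ = star (V * A + A * V) * V := by
          rw [star_add, star_mul, star_mul, hA.star_eq, add_mul, mul_assoc A, hAE, add_comm]
      _ = star T * V + star T * V := by rw [hT, star_add, add_mul]
  calc A * T = star T * (star T * V * T) := by rw [← hQV]; noncomm_ring
    _ = star T * A := by rw [← hVT, mul_assoc, hVQ]

theorem isStarProjection_of_star_mul_star_mul_eq {T E : R} (hE : IsStarProjection E)
    (hTE : T * E = T) (hED : E * (T + T - T * T) = T + T - T * T)
    (hdual : star T * star T * E = T + T - T * T) : IsStarProjection T := by
  set D := T + T - T * T with hD
  set P := E * T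
  have hEQ : E * (T * T) = star D := by
    simpa only [star_mul, star_star, hE.isSelfAdjoint.star_eq, mul_assoc] using congrArg star hdual
  have hPsa : star P = P := by
    have h2P : P + P = D + star D := by
      rw [← hEQ, ← hED, ← mul_add, ← mul_add, hD, sub_add_cancel]
    apply eq_of_add_self_eq_add_self
    rw [← star_add, h2P, star_add, star_star, add_comm]
  have hP2 : P * P = E * (T * T) := by simp only [P, mul_assoc, ← mul_assoc T, hTE]
  have hEQD : E * (T * T) = D := by
    rw [← star_star D, ← hEQ, ← hP2, star_mul, hPsa]
  have hPD : P = D := by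
    apply eq_of_add_self_eq_add_self
    calc P + P = E * D + E * (T * T) := by rw [← mul_add, ← mul_add, hD, sub_add_cancel]
      _ = D + D := by rw [hED, hEQD]
  have hPP : P * P = P := by rw [hP2, hEQD, hPD]
  have hTP : T * P = T * T := by rw [← mul_assoc, hTE]
  have hQP : T * T = P := by
    apply add_right_cancel (b := T * T)
    calc T * T + T * T = (T + T) * P := by rw [add_mul, hTP]
      _ = (P + T * T) * P := by rw [hPD, hD, sub_add_cancel]
      _ = P + T * T := by rw [add_mul, hPP, ← hTP, mul_assoc, hPP]
  have hTeqP : T = P := by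
    apply eq_of_add_self_eq_add_self
    rw [← sub_add_cancel (T + T) (T * T), ← hD, ← hPD, hQP]
  exact hTeqP ▸ ⟨hPP, hPsa⟩

end StarRing

theorem isSelfAdjoint_absOp (T : H →L[ℂ] H) : IsSelfAdjoint (absOp T) :=
  .of_nonneg (CFC.sqrt_nonneg _)

theorem absOp_mul_absOp (T : H →L[ℂ] H) : absOp T * absOp T = star T * T := by
  rw [absOp, ← ContinuousLinearMap.star_eq_adjoint]
  exact CFC.sqrt_mul_sqrt_self _ (star_mul_self_nonneg T)

theorem ker_absOp (T : H →L[ℂ] H) : (absOp T).ker = T.ker := by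
  have h := (absOp T).ker_adjoint_comp_self
  rw [← ContinuousLinearMap.star_eq_adjoint, (isSelfAdjoint_absOp T).star_eq,
    ← ContinuousLinearMap.mul_def, absOp_mul_absOp, ContinuousLinearMap.star_eq_adjoint,
    ContinuousLinearMap.mul_def, ContinuousLinearMap.ker_adjoint_comp_self] at h
  exact h.symm

theorem absOp_of_isStarProjection {P : H →L[ℂ] H} (hP : IsStarProjection P) : absOp P = P := by
  rw [absOp, ← ContinuousLinearMap.star_eq_adjoint, hP.isSelfAdjoint.star_eq,
    hP.isIdempotentElem.eq]
  exact CFC.sqrt_unique hP.isIdempotentElem.eq hP.nonneg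

theorem ContinuousLinearMap.mul_eq_zero_of_ker_le {R M : Type*} [Semiring R] [TopologicalSpace M]
    [AddCommMonoid M] [Module R M] {X Y Z : M →L[R] M} (hker : X.ker ≤ Y.ker)
    (hXZ : X * Z = 0) : Y * Z = 0 := by
  ext x
  exact hker (show X (Z x) = 0 from congrArg (· x) hXZ)

theorem mul_star_eq_zero_of_mul_eq_zero_of_ker_le {A B V : H →L[ℂ] H} (hA : IsSelfAdjoint A)
    (hker : A.ker ≤ V.ker) (hBA : B * A = 0) : B * star V = 0 := by
  have hrange : (star V).range ≤ B.ker :=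
    calc (star V).range ≤ V.kerᗮ := by
          rw [V.orthogonal_ker, ← ContinuousLinearMap.star_eq_adjoint]
          exact Submodule.le_topologicalClosure _
      _ ≤ A.kerᗮ := Submodule.orthogonal_le hker
      _ = A.range.topologicalClosure := by
          rw [A.orthogonal_ker, ← ContinuousLinearMap.star_eq_adjoint, hA.star_eq]
      _ ≤ B.ker := by
          refine Submodule.topologicalClosure_minimal _ ?_ B.isClosed_ker
          rintro _ ⟨x, rfl⟩
          exact congrArg (· x) hBA
  ext x
  exact hrange ⟨x, rfl⟩

theorem meanTransform_of_isStarProjection {P : H →L[ℂ] H} (hP : IsStarProjection P) :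
    meanTransform P = P := by
  have habs := absOp_of_isStarProjection hP
  have hex : ∃ V, IsPolarIsometry P V := by
    refine ⟨P, ?_, ?_, rfl⟩
    · rw [← ContinuousLinearMap.star_eq_adjoint, hP.isSelfAdjoint.star_eq,
        hP.isIdempotentElem.eq, hP.isIdempotentElem.eq]
    · rw [habs, hP.isIdempotentElem.eq]
  obtain ⟨-, hVP, hker⟩ := hex.choose_spec
  rw [habs] at hVP
  have hV : hex.choose = P := by
    have : hex.choose * (1 - P) = 0 :=
      ContinuousLinearMap.mul_eq_zero_of_ker_le hker.ge hP.mul_one_sub_self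
    rwa [mul_sub, mul_one, hVP, sub_eq_zero] at this
  rw [meanTransform, dif_pos hex, hV, habs, hP.isIdempotentElem.eq, ← two_smul ℂ,
    inv_smul_smul₀ two_ne_zero]

theorem IsPolarIsometry.absOp_mul_star_mul_self {T V : H →L[ℂ] H} (hV : IsPolarIsometry T V) :
    absOp T * (star V * V) = absOp T := by
  obtain ⟨hV, -, hker⟩ := hV
  rw [← ContinuousLinearMap.star_eq_adjoint] at hV
  have hV1 : V * (1 - star V * V) = 0 := by rw [mul_sub, mul_one, ← mul_assoc, hV, sub_self]
  have hA1 := ContinuousLinearMap.mul_eq_zero_of_ker_le ((ker_absOp T).trans hker.symm).ge hV1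
  rwa [mul_sub, mul_one, sub_eq_zero, eq_comm] at hA1

theorem isStarProjection_of_meanTransform_mul_self {T : H →L[ℂ] H}
    (h : meanTransform (T * T) = T) : IsStarProjection T := by
  have : IsAddTorsionFree (H →L[ℂ] H) := .of_isTorsionFree ℂ _
  rw [meanTransform] at h
  split_ifs at h with hex
  swap
  · exact h ▸ IsStarProjection.zero _
  have hAE := hex.choose_spec.absOp_mul_star_mul_self
  obtain ⟨hV, hVA, hker⟩ := hex.choose_spec
  set V := hex.choose
  set A := absOp (T * T)
  set E := star V * V
  rw [← ContinuousLinearMap.star_eq_adjoint] at hV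
  have hA : IsSelfAdjoint A := isSelfAdjoint_absOp _
  have hkerA : A.ker = V.ker := (ker_absOp _).trans hker.symm
  have hE : IsStarProjection E := isStarProjection_star_mul_self_of_mul_star_mul_eq hV
  have hVE : V * E = V := by rw [← mul_assoc, hV]
  have hEA : E * A = A := by
    simpa only [star_mul, hE.isSelfAdjoint.star_eq, hA.star_eq] using congrArg star hAE
  have hT : V * A + A * V = T + T := by
    have := congrArg ((2 : ℂ) • ·) h
    rwa [smul_inv_smul₀ two_ne_zero, two_smul] at this
  have hAV : A * V = T + T - T * T := eq_sub_of_add_eq' (hVA ▸ hT)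
  have hTE : T * E = T := by
    apply eq_of_add_self_eq_add_self
    rw [← add_mul, ← hT, add_mul, mul_assoc, mul_assoc, hAE, hVE]
  have hAT : A * T = star T * A := mul_eq_star_mul_of_mul_add_mul_eq hA hAE hVA hT
  have hdual : star T * star T * E = T + T - T * T := by
    have hA0 : (star T * star T - A * V) * A = 0 := by
      rw [sub_mul, sub_eq_zero, mul_assoc, ← hAT, ← mul_assoc, ← hAT, mul_assoc, ← hVA,
        mul_assoc]
    have hE0 : (star T * star T - A * V) * E = 0 := by
      rw [← mul_assoc, mul_star_eq_zero_of_mul_eq_zero_of_ker_le hA hkerA.le hA0, zero_mul]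
    rwa [sub_mul, sub_eq_zero, hAV, sub_mul, add_mul, hTE, mul_assoc T T E, hTE] at hE0
  have hED : E * (T + T - T * T) = T + T - T * T := by rw [← hAV, ← mul_assoc, hEA]
  exact isStarProjection_of_star_mul_star_mul_eq hE hTE hED hdual

section Jordan

variable {E : Type*} [NormedAddCommGroup E] [InnerProductSpace ℂ E]

theorem jordanProd_self (T : E →L[ℂ] E) : jordanProd T T = T * T := by
  rw [jordanProd, ← two_smul ℂ, inv_smul_smul₀ two_ne_zero]

theorem one_jordanProd (T : E →L[ℂ] E) : jordanProd 1 T = T := by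
  rw [jordanProd, one_mul, mul_one, ← two_smul ℂ, inv_smul_smul₀ two_ne_zero]

theorem jordanProd_one (T : E →L[ℂ] E) : jordanProd T 1 = T := by
  rw [jordanProd, one_mul, mul_one, ← two_smul ℂ, inv_smul_smul₀ two_ne_zero]

end Jordan

theorem phi_one
    {K : Type*} [NormedAddCommGroup K] [InnerProductSpace ℂ K] [CompleteSpace K]
    (Φ : (H →L[ℂ] H) → (K →L[ℂ] K)) (hΦ : Function.Bijective Φ)
    (hc : ∀ A B : H →L[ℂ] H,
      meanTransform (jordanProd (Φ A) (Φ B)) = Φ (meanTransform (jordanProd A B))) :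
    Φ 1 = 1 := by
  obtain ⟨S, hS⟩ := hΦ.2 1
  have hSS : meanTransform (S * S) = S := hΦ.1 <| by
    rw [← jordanProd_self, ← hc, hS, jordanProd_self, one_mul,
      meanTransform_of_isStarProjection (.one _)]
  have hMS : meanTransform S = S :=
    meanTransform_of_isStarProjection (isStarProjection_of_meanTransform_mul_self hSS)
  have hMC : meanTransform (Φ 1) = 1 := by
    rw [← one_jordanProd (Φ 1), ← hS, hc, jordanProd_one, hMS]
  have hC : IsStarProjection (Φ 1) := by
    refine isStarProjection_of_meanTransform_mul_self ?_
    rw [← jordanProd_self, hc, jordanProd_self, one_mul,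
      meanTransform_of_isStarProjection (.one _)]
  rw [← meanTransform_of_isStarProjection hC, hMC]

end
end
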